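/- Suppose y, z ∈ ℕ satisfy y ≥ 2, y ≥ z ≥ 1, a₁ − d ≥ C(y,2) + 1 (C(y,2) the binomial coefficient y choose 2), and ⌊ω_{a₁−1}/a₁⌋ = ⌊ω_z/a₁⌋ + ⌊ω₁/a₁⌋. Then for every i with z ≤ i ≤ y one has ⌊ω_i/a₁⌋ = ⌊ω_z/a₁⌋ = ⌊ω_y/a₁⌋, and Q + 1 = ⌊ω_z/a₁⌋ + ⌊ω₁/a₁⌋. -/

import Mathlib

/-!
The largest Apéry element is `F + a₁`, so `⌊ω_{a₁-1}/a₁⌋ = Q + 1`, and the floor hypothesis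
turns `⌊ω_y/a₁⌋ > ⌊ω_z/a₁⌋` into `⌊ω₁/a₁⌋ + ⌊ω_y/a₁⌋ > ⌊ω_{a₁-1}/a₁⌋`. A nonzero Apéry element
is either one of the `d - 1` generators other than `a₁` or a sum of two nonzero Apéry elements;
since `⌊·/a₁⌋` is superadditive, both summands must then lie among `ω₁, …, ω_{y-1}`. Counting
unordered pairs gives `a₁ - 1 ≤ (d - 1) + C(y, 2)`, contradicting `a₁ - d ≥ C(y, 2) + 1`. So
`⌊ω_y/a₁⌋ ≤ ⌊ω_z/a₁⌋`, and monotonicity makes `⌊ω_i/a₁⌋` constant for `z ≤ i ≤ y`.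
-/

open Finset

theorem Nat.le_choose_two_add_one (y : ℕ) : y ≤ y.choose 2 + 1 := by
  cases y with
  | zero => simp
  | succ m =>
    rw [Nat.choose_succ_succ', Nat.choose_one_right]
    omega

theorem Finset.card_le_card_add_choose_two {A : Type*} [AddCommMonoid A] [DecidableEq A]
    {s g B : Finset A} (h : ∀ w ∈ s, w ∈ g ∨ ∃ u ∈ B, ∃ v ∈ B, u + v = w) :
    #s ≤ #g + (#B + 1).choose 2 := by
  have hsub : s ⊆ g ∪ B.sym2.image (Sym2.lift ⟨(· + ·), add_comm⟩) := by
    intro w hw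
    rcases h w hw with hg | ⟨u, hu, v, hv, rfl⟩
    · exact mem_union_left _ hg
    · exact mem_union_right _ (mem_image.2 ⟨s(u, v), mk_mem_sym2_iff.2 ⟨hu, hv⟩, rfl⟩)
  calc #s ≤ #(g ∪ B.sym2.image (Sym2.lift ⟨(· + ·), add_comm⟩)) := card_le_card hsub
    _ ≤ #g + #(B.sym2.image (Sym2.lift ⟨(· + ·), add_comm⟩)) := card_union_le _ _
    _ ≤ #g + #B.sym2 := by gcongr; exact card_image_le
    _ = #g + (#B + 1).choose 2 := by rw [card_sym2]

namespace AddSubmonoid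

theorem eq_zero_or_mem_or_exists_add_of_mem_closure {A : Type*} [AddMonoid A] {s : Set A}
    {w : A} (hw : w ∈ closure s) :
    w = 0 ∨ w ∈ s ∨ ∃ u ∈ closure s, ∃ v ∈ closure s, u ≠ 0 ∧ v ≠ 0 ∧ u + v = w := by
  induction hw using closure_induction with
  | mem x hx => exact .inr (.inl hx)
  | zero => exact .inl rfl
  | add x y hx hy ihx ihy =>
    by_cases hx0 : x = 0
    · simpa [hx0] using ihy
    by_cases hy0 : y = 0
    · simpa [hy0] using ihx
    exact .inr (.inr ⟨x, hx, y, hy, hx0, hy0, rfl⟩)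

def apery (M : AddSubmonoid ℕ) (n : ℕ) : Set ℕ := {w ∈ M | ¬ ∃ s ∈ M, s + n = w}

variable {M : AddSubmonoid ℕ} {n F : ℕ}

theorem zero_mem_apery (hn : 0 < n) : 0 ∈ M.apery n :=
  ⟨M.zero_mem, fun ⟨_, _, h⟩ => by omega⟩

theorem mem_apery_of_add_mem_apery {u v : ℕ} (h : u + v ∈ M.apery n) (hu : u ∈ M)
    (hv : v ∈ M) : u ∈ M.apery n :=
  ⟨hu, fun ⟨s, hs, hsu⟩ => h.2 ⟨s + v, M.add_mem hs hv, by omega⟩⟩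

theorem add_mem_apery_of_frobenius (hF : F ∉ M) (hFmax : ∀ m, F < m → m ∈ M) (hn : 0 < n) :
    F + n ∈ M.apery n :=
  ⟨hFmax _ (by omega), fun ⟨s, hs, h⟩ => hF (Nat.add_right_cancel h ▸ hs)⟩

theorem le_frobenius_add_of_mem_apery (hFmax : ∀ m, F < m → m ∈ M) {w : ℕ}
    (hw : w ∈ M.apery n) : w ≤ F + n := by
  by_contra! h
  exact hw.2 ⟨w - n, hFmax _ (by omega), by omega⟩

theorem mem_or_exists_add_of_mem_apery_closure {s : Set ℕ} {w : ℕ}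
    (hw : w ∈ (closure s).apery n) (hw0 : w ≠ 0) :
    (w ∈ s ∧ w ≠ n) ∨ ∃ u ∈ (closure s).apery n, ∃ v ∈ (closure s).apery n,
      u ≠ 0 ∧ v ≠ 0 ∧ u + v = w := by
  rcases eq_zero_or_mem_or_exists_add_of_mem_closure hw.1 with
    h0 | hs | ⟨u, hu, v, hv, hu0, hv0, rfl⟩
  · exact absurd h0 hw0
  · exact .inl ⟨hs, fun h => hw.2 ⟨0, zero_mem _, by omega⟩⟩
  · have hvu : v + u ∈ (closure s).apery n := add_comm u v ▸ hw
    exact .inr ⟨u, mem_apery_of_add_mem_apery hw hu hv, v,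
      mem_apery_of_add_mem_apery hvu hv hu, hu0, hv0, rfl⟩

variable {ω : ℕ → ℕ}

theorem apery_enum_zero (hωM : ω '' Set.Iio n = M.apery n) (hω : StrictMonoOn ω (Set.Iio n))
    (hn : 0 < n) : ω 0 = 0 := by
  obtain ⟨i, hi, hi0⟩ : 0 ∈ ω '' Set.Iio n := hωM ▸ zero_mem_apery hn
  have := hω.monotoneOn (Set.mem_Iio.2 hn) hi (Nat.zero_le i)
  omega

theorem apery_enum_last (hωM : ω '' Set.Iio n = M.apery n) (hω : StrictMonoOn ω (Set.Iio n))
    (hF : F ∉ M) (hFmax : ∀ m, F < m → m ∈ M) (hn : 0 < n) : ω (n - 1) = F + n := by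
  have hlast : n - 1 ∈ Set.Iio n := Set.mem_Iio.2 (by omega)
  obtain ⟨i, hi, hiF⟩ : F + n ∈ ω '' Set.Iio n := hωM ▸ add_mem_apery_of_frobenius hF hFmax hn
  have hle : ω i ≤ ω (n - 1) := hω.monotoneOn hi hlast (by simp only [Set.mem_Iio] at hi; omega)
  have hge : ω (n - 1) ≤ F + n :=
    le_frobenius_add_of_mem_apery hFmax (hωM ▸ Set.mem_image_of_mem ω hlast)
  omega

theorem apery_enum_lt_of_add_mem_apery (hωM : ω '' Set.Iio n = M.apery n)
    (hω : StrictMonoOn ω (Set.Iio n)) {y : ℕ} (hlt : ω (n - 1) / n < ω 1 / n + ω y / n)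
    {j k : ℕ} (hj1 : 1 ≤ j) (hj : j < n) (hk : k < n) (hjk : ω j + ω k ∈ M.apery n) :
    k < y := by
  have hdiv_le : ∀ i i', i ≤ i' → i' < n → ω i / n ≤ ω i' / n := fun i i' hii' hi' =>
    Nat.div_le_div_right (hω.monotoneOn (by simp only [Set.mem_Iio]; omega) hi' hii')
  obtain ⟨i, hi, hijk⟩ : ω j + ω k ∈ ω '' Set.Iio n := hωM ▸ hjk
  rw [Set.mem_Iio] at hi
  by_contra! hyk
  have : ω 1 / n + ω y / n ≤ ω (n - 1) / n :=
    calc ω 1 / n + ω y / n ≤ ω j / n + ω k / n :=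
          add_le_add (hdiv_le 1 j hj1 hj) (hdiv_le y k hyk hk)
      _ ≤ (ω j + ω k) / n := Nat.div_add_div_le_add_div
      _ ≤ ω (n - 1) / n := hijk ▸ hdiv_le i (n - 1) (by omega) (by omega)
  omega

end AddSubmonoid

open AddSubmonoid

theorem le_card_add_choose_of_div_lt {ι : Type*} [Fintype ι] {a : ι → ℕ} {ω : ℕ → ℕ}
    {n y : ℕ} (hn : 0 < n) (hna : n ∈ Set.range a) (hω : StrictMonoOn ω (Set.Iio n))
    (hωM : ω '' Set.Iio n = (AddSubmonoid.closure (Set.range a)).apery n)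
    (hlt : ω (n - 1) / n < ω 1 / n + ω y / n) :
    n ≤ Fintype.card ι + y.choose 2 := by
  classical
  set M := AddSubmonoid.closure (Set.range a)
  have hω0 : ω 0 = 0 := apery_enum_zero hωM hω hn
  have hindex : ∀ u ∈ M.apery n, u ≠ 0 →
      ∃ j, 1 ≤ j ∧ j < n ∧ ω j = u := by
    intro u hu hu0
    obtain ⟨j, hj, rfl⟩ : u ∈ ω '' Set.Iio n := hωM ▸ hu
    exact ⟨j, Nat.pos_of_ne_zero fun h => hu0 (h ▸ hω0), hj, rfl⟩
  have hcount := card_le_card_add_choose_two (s := (Ico 1 n).image ω)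
    (g := (univ.image a).erase n) (B := (Ico 1 y).image ω) <| by
    intro w hw
    obtain ⟨i, hi, rfl⟩ := mem_image.1 hw
    obtain ⟨hi1, hin⟩ := mem_Ico.1 hi
    have hw0 : ω i ≠ 0 := fun h =>
      absurd (hω.injOn (Set.mem_Iio.2 hin) (Set.mem_Iio.2 hn) (h.trans hω0.symm)) (by omega)
    have hwM : ω i ∈ M.apery n := hωM ▸ ⟨i, hin, rfl⟩
    rcases mem_or_exists_add_of_mem_apery_closure hwM hw0 with
      ⟨⟨t, ht⟩, hwn⟩ | ⟨u, hu, v, hv, hu0, hv0, huv⟩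
    · exact .inl (mem_erase.2 ⟨hwn, ht ▸ mem_image_of_mem a (mem_univ t)⟩)
    obtain ⟨j, hj1, hj, rfl⟩ := hindex u hu hu0
    obtain ⟨k, hk1, hk, rfl⟩ := hindex v hv hv0
    have hjk : ω j + ω k ∈ M.apery n := huv ▸ hwM
    have hkj := add_comm (ω j) (ω k) ▸ hjk
    refine .inr ⟨ω j, mem_image_of_mem ω (mem_Ico.2 ⟨hj1, ?_⟩), ω k,
      mem_image_of_mem ω (mem_Ico.2 ⟨hk1, ?_⟩), huv⟩
    · exact apery_enum_lt_of_add_mem_apery hωM hω hlt hk1 hk hj hkj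
    · exact apery_enum_lt_of_add_mem_apery hωM hω hlt hj1 hj hk hjk
  have hs : #((Ico 1 n).image ω) = n - 1 := by
    rw [card_image_of_injOn (hω.injOn.mono fun k hk => Set.mem_Iio.2 (mem_Ico.1 hk).2),
      Nat.card_Ico]
  have hg : #((univ.image a).erase n) ≤ Fintype.card ι - 1 := by
    obtain ⟨t, rfl⟩ := hna
    rw [card_erase_of_mem (mem_image_of_mem a (mem_univ t))]
    exact Nat.sub_le_sub_right card_image_le 1
  have hB : (#((Ico 1 y).image ω) + 1).choose 2 ≤ y.choose 2 := by
    rcases Nat.eq_zero_or_pos y with rfl | hy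
    · simp
    · have := card_image_le (s := Ico 1 y) (f := ω)
      rw [Nat.card_Ico] at this
      exact Nat.choose_le_choose 2 (by omega)
  have hι : 0 < Fintype.card ι := Fintype.card_pos_iff.2 ⟨hna.choose⟩
  omega

theorem stmt16
    (d : ℕ) (hd : 2 ≤ d)
    (a : Fin d → ℕ)
    (a1 : ℕ) (ha1 : a1 = a ⟨0, by omega⟩)
    (S : Set ℕ)
    (hS : S = {m : ℕ | ∃ c : Fin d → ℕ, m = ∑ i, c i * a i})
    (F : ℕ) (hF : F ∉ S) (hFmax : ∀ m : ℕ, F < m → m ∈ S)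
    (ω : ℕ → ℕ)
    (hω_mono : ∀ i j : ℕ, i < j → j < a1 → ω i < ω j)
    (hω_range : ω '' Set.Iio a1 = {w ∈ S | ¬ ∃ s ∈ S, s + a1 = w})
    (Q R : ℕ) (hQR : F + 1 = Q * a1 + R) (hR2 : 2 ≤ R) (hRa : R ≤ a1)
    (y : ℕ) (hyd : y.choose 2 + 1 ≤ a1 - d)
    (z : ℕ)
    (hfloor : ω (a1 - 1) / a1 = ω z / a1 + ω 1 / a1)
    :
    (∀ i : ℕ, z ≤ i → i ≤ y → ω i / a1 = ω z / a1 ∧ ω i / a1 = ω y / a1) ∧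
      Q + 1 = ω z / a1 + ω 1 / a1 := by
  have ha1_pos : 0 < a1 := by omega
  have hSM : S = AddSubmonoid.closure (Set.range a) := by
    ext m
    rw [hS, SetLike.mem_coe, AddSubmonoid.mem_closure_range_iff_of_fintype]
    simp only [Set.mem_ofPred_eq, smul_eq_mul]
  subst hSM
  have hω : StrictMonoOn ω (Set.Iio a1) := fun i _ j hj hij => hω_mono i j hij hj
  have htop : ω (a1 - 1) / a1 = Q + 1 := by
    rw [apery_enum_last hω_range hω hF hFmax ha1_pos,
      show F + a1 = R - 1 + (Q + 1) * a1 by rw [add_one_mul]; omega,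
      Nat.add_mul_div_right _ _ ha1_pos, Nat.div_eq_of_lt (by omega), zero_add]
  have hya : y < a1 := by have := Nat.le_choose_two_add_one y; omega
  have hdiv_le : ∀ i j, i ≤ j → j ≤ y → ω i / a1 ≤ ω j / a1 := fun i j hij hj =>
    Nat.div_le_div_right (hω.monotoneOn (by simp only [Set.mem_Iio]; omega)
      (by simp only [Set.mem_Iio]; omega) hij)
  have hyz : ω y / a1 ≤ ω z / a1 := by
    by_contra! h
    have := le_card_add_choose_of_div_lt (y := y) ha1_pos ⟨_, ha1.symm⟩ hω hω_range (by omega)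
    rw [Fintype.card_fin] at this
    omega
  refine ⟨fun i hzi hiy => ?_, by rw [← htop, hfloor]⟩
  have := hdiv_le z i hzi hiy
  have := hdiv_le i y hiy le_rfl
  omega
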